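/- Let R⁻¹ be the tridiagonal matrix with diagonal entries (R⁻¹)₁₁ = 1/(1−e^{−2θΔ₂}), (R⁻¹)ᵢᵢ = 1/(1−e^{−2θΔᵢ}) + e^{−2θΔ_{i+1}}/(1−e^{−2θΔ_{i+1}}) for 2 ≤ i ≤ n−1, (R⁻¹)ₙₙ = 1/(1−e^{−2θΔₙ}), and off-diagonal entries (R⁻¹)_{i,i+1} = (R⁻¹)_{i+1,i} = −e^{−θΔ_{i+1}}/(1−e^{−2θΔ_{i+1}}), all other entries 0. Let R be the matrix with entries Rᵢⱼ = e^{−θ|sᵢ−sⱼ|} where sᵢ − s_{i−1} = Δᵢ > 0. Then R·R⁻¹ = I. -/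

import Mathlib

/-
The exponential kernel is Markov: if `x ≤ y ≤ z` then `e^{-θ|x-z|} = e^{-θ|x-y|} e^{-θ|y-z|}`.
Writing `ρₖ` for the correlation of the consecutive points `k` and `k + 1`, row `i` of `R`
therefore satisfies `R i (k+1) = ρₖ R i k` for `k ≥ i` and `R i k = ρₖ R i (k+1)` for `k < i`.
Column `j` of the tridiagonal matrix is `e₀` (for `j = 0`) or `v_{j-1} / (1 - ρ_{j-1}²)`, minus
`ρⱼ vⱼ / (1 - ρⱼ²)` if `j + 1 < n`, where `vₖ = e_{k+1} - ρₖ eₖ` is the innovation of the chain at step `k`.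
Pairing row `i` with `vₖ / (1 - ρₖ²)` gives `0` for `k ≥ i` and `R i (k+1)` for `k < i`, so the
`(i, j)` entry of the product is `[j ≤ i] R i j - [j < i] R i j = δᵢⱼ`.
-/

/-- The explicit tridiagonal candidate inverse of the exponential covariance
matrix at points `s 1 < s 2 < ... < s n` (index `i : Fin n` corresponds to the
point `s (i+1)`), with gaps `Δ k = s k - s (k-1)`. -/
noncomputable def expCovInv (n : ℕ) (θ : ℝ) (s : ℕ → ℝ) : Matrix (Fin n) (Fin n) ℝ :=
  Matrix.of fun i j : Fin n =>
    let Δ : ℕ → ℝ := fun k => s k - s (k - 1)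
    if i = j then
      (if i.val = 0 then 1 / (1 - Real.exp (-2 * θ * Δ 2))
       else if i.val = n - 1 then 1 / (1 - Real.exp (-2 * θ * Δ n))
       else 1 / (1 - Real.exp (-2 * θ * Δ (i.val + 1)))
            + Real.exp (-2 * θ * Δ (i.val + 2)) / (1 - Real.exp (-2 * θ * Δ (i.val + 2))))
    else if j.val = i.val + 1 then
      -Real.exp (-θ * Δ (i.val + 2)) / (1 - Real.exp (-2 * θ * Δ (i.val + 2)))
    else if i.val = j.val + 1 then
      -Real.exp (-θ * Δ (j.val + 2)) / (1 - Real.exp (-2 * θ * Δ (j.val + 2)))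
    else 0

open Finset

/-- Precision matrix of a Gaussian Markov chain on `n` points in which consecutive points
`k`, `k + 1` have correlation `ρ k`. -/
noncomputable def markovPrecision (n : ℕ) (ρ : ℕ → ℝ) : Matrix (Fin n) (Fin n) ℝ :=
  Matrix.of fun a b : Fin n =>
    if a = b then
      (if a.val = 0 then 1 / (1 - ρ 0 ^ 2)
       else if a.val = n - 1 then 1 / (1 - ρ (a.val - 1) ^ 2)
       else 1 / (1 - ρ (a.val - 1) ^ 2) + ρ a.val ^ 2 / (1 - ρ a.val ^ 2))
    else if b.val = a.val + 1 then -ρ a.val / (1 - ρ a.val ^ 2)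
    else if a.val = b.val + 1 then -ρ b.val / (1 - ρ b.val ^ 2)
    else 0

def innovation (ρ : ℕ → ℝ) (e k : ℕ) : ℝ :=
  (if k = e + 1 then 1 else 0) - ρ e * if k = e then 1 else 0

lemma markovPrecision_apply_eq_innovation {n : ℕ} {ρ : ℕ → ℝ} (hn : 2 ≤ n)
    (hρ : ρ 0 ^ 2 ≠ 1) (a b : Fin n) :
    markovPrecision n ρ a b =
      (if b.val = 0 then (if a.val = 0 then 1 else 0)
        else innovation ρ (b - 1) a / (1 - ρ (b - 1) ^ 2))
      - if b.val + 1 < n then ρ b * innovation ρ b a / (1 - ρ b ^ 2) else 0 := by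
  obtain ⟨a, ha⟩ := a
  obtain ⟨b, hb⟩ := b
  simp only [markovPrecision, innovation, Matrix.of_apply, Fin.mk.injEq]
  have h0 : 1 - ρ 0 ^ 2 ≠ 0 := sub_ne_zero.2 hρ.symm
  split_ifs <;> subst_vars <;> first | omega | (field_simp; ring)

lemma sum_mul_ite_val_eq {n e : ℕ} (f : ℕ → ℝ) (he : e < n) :
    ∑ k : Fin n, f k * (if k.val = e then 1 else 0) = f e := by
  rw [Fin.sum_univ_eq_sum_range (fun k => f k * if k = e then 1 else 0)]
  simp [he]

lemma sum_mul_innovation {n : ℕ} (ρ f : ℕ → ℝ) {e : ℕ} (he : e + 1 < n) :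
    ∑ k : Fin n, f k * innovation ρ e k = f (e + 1) - ρ e * f e := by
  simp only [innovation, mul_sub, mul_left_comm _ (ρ e), sum_sub_distrib, ← mul_sum,
    sum_mul_ite_val_eq f he, sum_mul_ite_val_eq f (Nat.lt_of_succ_lt he)]

lemma sum_mul_markovPrecision {n : ℕ} {ρ : ℕ → ℝ} (hn : 2 ≤ n) (hρ : ρ 0 ^ 2 ≠ 1)
    (f : ℕ → ℝ) (b : Fin n) :
    ∑ k : Fin n, f k * markovPrecision n ρ k b =
      (if b.val = 0 then f 0
        else (f b - ρ (b - 1) * f (b - 1)) / (1 - ρ (b - 1) ^ 2))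
      - if b.val + 1 < n then ρ b * ((f (b + 1) - ρ b * f b) / (1 - ρ b ^ 2)) else 0 := by
  obtain ⟨_ | e, hb⟩ := b
  · have h1 : 0 + 1 < n := by omega
    simp only [markovPrecision_apply_eq_innovation hn hρ, if_pos h1, if_true, mul_sub,
      sum_sub_distrib, mul_div_assoc', ← sum_div, mul_left_comm _ (ρ _), ← mul_sum,
      sum_mul_ite_val_eq f hb, sum_mul_innovation ρ f h1]
  · by_cases he : e + 1 + 1 < n
    · simp only [markovPrecision_apply_eq_innovation hn hρ, if_pos he, Nat.add_one_ne_zero,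
        if_false, mul_sub, sum_sub_distrib, mul_div_assoc', ← sum_div, mul_left_comm _ (ρ _),
        ← mul_sum, Nat.add_sub_cancel, sum_mul_innovation ρ f he, sum_mul_innovation ρ f hb]
    · simp only [markovPrecision_apply_eq_innovation hn hρ, if_neg he, Nat.add_one_ne_zero,
        if_false, mul_sub, sum_sub_distrib, mul_div_assoc', ← sum_div, mul_zero, sum_const_zero,
        Nat.add_sub_cancel, sum_mul_innovation ρ f hb]

theorem mul_markovPrecision_eq_one {n : ℕ} {ρ : ℕ → ℝ} (hn : 2 ≤ n)
    (hρ : ∀ k, k + 1 < n → ρ k ^ 2 ≠ 1) (r : ℕ → ℕ → ℝ) (hdiag : ∀ i, r i i = 1)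
    (hright : ∀ i k, i ≤ k → k + 1 < n → r i (k + 1) = ρ k * r i k)
    (hleft : ∀ i k, k < i → i < n → r i k = ρ k * r i (k + 1)) :
    Matrix.of (fun i j : Fin n => r i j) * markovPrecision n ρ = 1 := by
  ext i j
  have pairing : ∀ e, e + 1 < n →
      (r i (e + 1) - ρ e * r i e) / (1 - ρ e ^ 2) = if e < i then r i (e + 1) else 0 := by
    intro e he
    have hne : 1 - ρ e ^ 2 ≠ 0 := sub_ne_zero.2 (hρ e he).symm
    split_ifs with hei
    · rw [hleft i e hei i.isLt]
      field_simp
    · rw [hright i e (not_lt.1 hei) he, sub_self, zero_div]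
  have first : (if j.val = 0 then r i 0
      else (r i j - ρ (j - 1) * r i (j - 1)) / (1 - ρ (j - 1) ^ 2)) =
      if j.val ≤ i then r i j else 0 := by
    obtain ⟨_ | e, hj⟩ := j
    · simp
    · simp only [Nat.add_one_ne_zero, if_false, Nat.add_sub_cancel, pairing e hj,
        Nat.add_one_le_iff]
  have second : (if j.val + 1 < n then ρ j * ((r i (j + 1) - ρ j * r i j) / (1 - ρ j ^ 2))
      else 0) = if j.val < i then r i j else 0 := by
    split_ifs with hjn hji hji
    · rw [pairing j hjn, if_pos hji, hleft i j hji i.isLt]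
    · rw [pairing j hjn, if_neg hji, mul_zero]
    · omega
    · rfl
  rw [Matrix.mul_apply, Matrix.one_apply]
  simp only [Matrix.of_apply]
  rw [sum_mul_markovPrecision hn (hρ 0 (by omega)) (r i), first, second]
  rcases lt_trichotomy j.val i with hji | hji | hji
  · rw [if_pos hji.le, if_pos hji, sub_self, if_neg (by omega)]
  · rw [if_pos hji.le, if_neg hji.not_lt, sub_zero, if_pos (Fin.ext hji.symm), hji, hdiag]
  · rw [if_neg (not_le.2 hji), if_neg (by omega), sub_zero, if_neg (by omega)]

lemma exp_neg_two_mul_eq_sq (θ x : ℝ) : Real.exp (-2 * θ * x) = Real.exp (-θ * x) ^ 2 := by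
  rw [← Real.exp_nat_mul]
  ring_nf

theorem expCovInv_eq_markovPrecision (n : ℕ) (θ : ℝ) (s : ℕ → ℝ) :
    expCovInv n θ s = markovPrecision n (fun k => Real.exp (-θ * (s (k + 2) - s (k + 1)))) := by
  ext ⟨_ | a, ha⟩ ⟨b, hb⟩
  · simp only [expCovInv, markovPrecision, Matrix.of_apply, Fin.mk.injEq, exp_neg_two_mul_eq_sq]
    rfl
  · simp only [expCovInv, markovPrecision, Matrix.of_apply, Fin.mk.injEq, exp_neg_two_mul_eq_sq,
      Nat.add_sub_cancel, add_assoc, Nat.reduceAdd, Nat.add_one_ne_zero, if_false]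
    split_ifs with hab hlast <;> try rfl
    obtain rfl : n = a + 2 := by omega
    rfl

theorem exp_abs_mul_markovPrecision_eq_one {n : ℕ} (hn : 2 ≤ n) {θ : ℝ} (hθ : 0 < θ)
    {t : ℕ → ℝ} (ht : StrictMonoOn t (Set.Iio n)) :
    Matrix.of (fun i j : Fin n => Real.exp (-θ * |t i - t j|)) *
      markovPrecision n (fun k => Real.exp (-θ * (t (k + 1) - t k))) = 1 := by
  have hstep : ∀ k, k + 1 < n → t k < t (k + 1) := fun k hk =>
    ht (show k < n by omega) hk (Nat.lt_add_one k)
  have hle : ∀ i k, i ≤ k → k < n → t i ≤ t k := fun i k hik hk =>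
    ht.monotoneOn (show i < n by omega) hk hik
  refine mul_markovPrecision_eq_one hn (fun k hk => ?_) (fun i k => Real.exp (-θ * |t i - t k|))
    (fun i => by simp) (fun i k hik hk => ?_) (fun i k hki hi => ?_)
  · rw [← exp_neg_two_mul_eq_sq]
    refine (Real.exp_lt_one_iff.2 ?_).ne
    nlinarith [hstep k hk]
  · have h₁ := hle i k hik (by omega)
    have h₂ := hstep k hk
    rw [← Real.exp_add, abs_of_nonpos (by linarith), abs_of_nonpos (by linarith)]
    ring_nf
  · have h₁ := hle (k + 1) i hki hi
    have h₂ := hstep k (by omega)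
    rw [← Real.exp_add, abs_of_nonneg (by linarith), abs_of_nonneg (by linarith)]
    ring_nf

theorem stmt12_general (n : ℕ) (hn : 2 ≤ n) (θ : ℝ) (hθ : 0 < θ) (s : ℕ → ℝ)
    (hs : ∀ i, 1 ≤ i → i < n → s i < s (i + 1)) :
    (Matrix.of fun i j : Fin n =>
        Real.exp (-θ * |s (i.val + 1) - s (j.val + 1)|)) * expCovInv n θ s = 1 := by
  have ht : StrictMonoOn (fun k => s (k + 1)) (Set.Iio n) :=
    strictMonoOn_of_lt_add_one Set.ordConnected_Iio fun k _ _ hk => hs (k + 1) (by omega) hk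
  rw [expCovInv_eq_markovPrecision]
  exact exp_abs_mul_markovPrecision_eq_one hn hθ ht

theorem stmt12 (n : ℕ) (hn : 2 ≤ n) (θ : ℝ) (hθ : 0 < θ) (s : ℕ → ℝ)
    (hs1 : s 1 = 0) (hs : ∀ i, 1 ≤ i → i < n → s i < s (i + 1)) :
    (Matrix.of fun i j : Fin n =>
        Real.exp (-θ * |s (i.val + 1) - s (j.val + 1)|)) * expCovInv n θ s = 1 :=
  stmt12_general n hn θ hθ s hs
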